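/- Let W' be a finite index set, and for each i ∈ W' let Mᵢ be a finite nonempty subset of an index set [z] such that Mᵢ = {i} when i ∈ [z] ∩ W'. Suppose given reals A₁ⱼ, A₂ⱼ for j ∈ [z] with (A₁ⱼ, A₂ⱼ) = (0,0) exactly when j ∉ W', and reals Bⱼ ≥ 0. Then ⋂_{i ∈ [z] ∩ W'} Dᵢ ⊆ ⋂_{k ∈ W'} D_k, where for i ∈ [z] ∩ W', Dᵢ = {(σ₁,σ₂) : A₁ᵢσ₁ + A₂ᵢσ₂ > 1 − Bᵢ}, and for general k ∈ W', D_k = {(σ₁,σ₂) : ∑_{j ∈ M_k}(A₁ⱼσ₁ + A₂ⱼσ₂) > 1 − ∑_{j ∈ M_k} Bⱼ, and A₁ⱼσ₁ + A₂ⱼσ₂ > −Bⱼ for all j ∈ M_k ∩ W'}. -/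

import Mathlib

open Finset

theorem one_sub_sum_lt_sum {ι R : Type*} [Field R] [LinearOrder R] [IsStrictOrderedRing R]
    {s : Finset ι} (hs : s.Nonempty) {f B : ι → R} (h : ∀ j ∈ s, 1 - B j < f j) :
    1 - ∑ j ∈ s, B j < ∑ j ∈ s, f j :=
  calc 1 - ∑ j ∈ s, B j ≤ #s - ∑ j ∈ s, B j := by
        gcongr; exact_mod_cast hs.card_pos
    _ = ∑ j ∈ s, (1 - B j) := by simp [sum_sub_distrib]
    _ < ∑ j ∈ s, f j := sum_lt_sum_of_nonempty hs h

theorem inter_Di_subset_inter_Dk_general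
    {ι : Type*} [DecidableEq ι] (Z W' : Finset ι)
    (M : ι → Finset ι)
    (hMZ : ∀ k ∈ W', M k ⊆ Z)
    (hMne : ∀ k ∈ W', (M k ∩ W').Nonempty)
    (A₁ A₂ B : ι → ℝ)
    (hA : ∀ j ∈ Z, ((A₁ j, A₂ j) = (0, 0) ↔ j ∉ W'))
    (hB : ∀ j, 0 ≤ B j)
    (σ₁ σ₂ : ℝ)
    (hσ : ∀ i ∈ Z ∩ W', A₁ i * σ₁ + A₂ i * σ₂ > 1 - B i) :
    ∀ k ∈ W',
      ((∑ j ∈ M k, (A₁ j * σ₁ + A₂ j * σ₂)) > 1 - ∑ j ∈ M k, B j) ∧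
      (∀ j ∈ M k ∩ W', A₁ j * σ₁ + A₂ j * σ₂ > -(B j)) := by
  intro k hk
  have hσk : ∀ j ∈ M k ∩ W', 1 - B j < A₁ j * σ₁ + A₂ j * σ₂ := fun j hj =>
    hσ j (mem_inter.2 ⟨hMZ k hk (mem_inter.1 hj).1, (mem_inter.1 hj).2⟩)
  have hsum : ∑ j ∈ M k ∩ W', (A₁ j * σ₁ + A₂ j * σ₂) = ∑ j ∈ M k, (A₁ j * σ₁ + A₂ j * σ₂) := by
    refine sum_subset inter_subset_left fun j hj hjW => ?_
    have hj0 := (hA j (hMZ k hk hj)).2 fun h => hjW (mem_inter.2 ⟨hj, h⟩)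
    simp only [Prod.mk.injEq] at hj0
    simp [hj0]
  have hBsum : ∑ j ∈ M k ∩ W', B j ≤ ∑ j ∈ M k, B j :=
    sum_le_sum_of_subset_of_nonneg inter_subset_left fun j _ _ => hB j
  refine ⟨?_, fun j hj => by linarith [hσk j hj]⟩
  calc 1 - ∑ j ∈ M k, B j ≤ 1 - ∑ j ∈ M k ∩ W', B j := by linarith
    _ < ∑ j ∈ M k ∩ W', (A₁ j * σ₁ + A₂ j * σ₂) := one_sub_sum_lt_sum (hMne k hk) hσk
    _ = ∑ j ∈ M k, (A₁ j * σ₁ + A₂ j * σ₂) := hsum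

/-- The intersection of the ray-domains `Dᵢ`, `i ∈ [z] ∩ W'`, is contained in the
intersection of all domains `D_k`, `k ∈ W'`. Here `Z` plays the role of `[z]`,
`M k ⊆ Z` are the generating rays of the cone `R_k`, `M i = {i}` for
`i ∈ Z ∩ W'`, `(A₁ⱼ, A₂ⱼ) = (0,0)` exactly when `j ∉ W'`, and `Bⱼ ≥ 0`. -/
theorem inter_Di_subset_inter_Dk
    {ι : Type*} [DecidableEq ι] (Z W' : Finset ι)
    (M : ι → Finset ι)
    (hMZ : ∀ k ∈ W', M k ⊆ Z)
    (hMne : ∀ k ∈ W', (M k ∩ W').Nonempty)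
    (hMi : ∀ i ∈ Z ∩ W', M i = {i})
    (A₁ A₂ B : ι → ℝ)
    (hA : ∀ j ∈ Z, ((A₁ j, A₂ j) = (0, 0) ↔ j ∉ W'))
    (hB : ∀ j, 0 ≤ B j)
    (σ₁ σ₂ : ℝ)
    (hσ : ∀ i ∈ Z ∩ W', A₁ i * σ₁ + A₂ i * σ₂ > 1 - B i) :
    ∀ k ∈ W',
      ((∑ j ∈ M k, (A₁ j * σ₁ + A₂ j * σ₂)) > 1 - ∑ j ∈ M k, B j) ∧
      (∀ j ∈ M k ∩ W', A₁ j * σ₁ + A₂ j * σ₂ > -(B j)) :=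
  inter_Di_subset_inter_Dk_general Z W' M hMZ hMne A₁ A₂ B hA hB σ₁ σ₂ hσ
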